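/- (Power transformation reduces normalized variance) Let w : S → (0,∞) on a nonempty finite set S and let 0 < α ≤ 1. Define q_α(τ) = w(τ)^α / Σ_{τ'} w(τ')^α. Then the quantity V(α) = Σ_τ q_α(τ)² is monotone: V(α) ≤ V(1), i.e., Σ_τ w(τ)^{2α}/(Σ_τ w(τ)^α)² ≤ Σ_τ w(τ)²/(Σ_τ w(τ))². -/

import Mathlib

/-!
Write `a = w ^ α` and `r = w ^ (1 - α)`, so that `w = a * r` and `a`, `r` are both increasing
functions of `w`. Weighted Chebyshev's sum inequality with weights `a`, applied once to the pair
`(a, r)` and once to `(a * r, r)`, gives `Σ a² · Σ ar ≤ Σ a · Σ a²r` and `Σ a²r · Σ ar ≤ Σ a · Σ (ar)²`.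
Chaining them yields `Σ a² · (Σ ar)² ≤ Σ (ar)² · (Σ a)²`.
-/

open Finset

section Chebyshev

variable {ι R : Type*} [CommRing R] [LinearOrder R] [IsStrictOrderedRing R]
  {s : Finset ι} {p f g : ι → R}

theorem MonovaryOn.weighted_sum_mul_sum_le_sum_mul_sum (hp : ∀ i ∈ s, 0 ≤ p i)
    (hfg : MonovaryOn f g s) :
    (∑ i ∈ s, p i * f i) * (∑ i ∈ s, p i * g i) ≤ (∑ i ∈ s, p i) * ∑ i ∈ s, p i * (f i * g i) := by
  have hpairs : 0 ≤ ∑ i ∈ s, ∑ j ∈ s, p i * p j * ((f j - f i) * (g j - g i)) :=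
    sum_nonneg fun i hi => sum_nonneg fun j hj =>
      mul_nonneg (mul_nonneg (hp i hi) (hp j hj)) (hfg.sub_mul_sub_nonneg hi hj)
  have hexpand : ∑ i ∈ s, ∑ j ∈ s, p i * p j * ((f j - f i) * (g j - g i)) =
      (∑ i ∈ s, p i) * (∑ i ∈ s, p i * (f i * g i))
        + (∑ i ∈ s, p i * (f i * g i)) * (∑ i ∈ s, p i)
        - (∑ i ∈ s, p i * f i) * (∑ i ∈ s, p i * g i)
        - (∑ i ∈ s, p i * g i) * (∑ i ∈ s, p i * f i) := by
    simp only [sum_mul_sum, ← sum_add_distrib, ← sum_sub_distrib]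
    exact sum_congr rfl fun i _ => sum_congr rfl fun j _ => by ring
  linarith [mul_comm (∑ i ∈ s, p i) (∑ i ∈ s, p i * (f i * g i)),
    mul_comm (∑ i ∈ s, p i * f i) (∑ i ∈ s, p i * g i)]

end Chebyshev

section CollisionProbability

variable {ι K : Type*} [Field K] [LinearOrder K] [IsStrictOrderedRing K]
  {s : Finset ι} {a r : ι → K}

theorem sum_sq_div_sq_sum_le_of_monovaryOn (ha : ∀ i ∈ s, 0 < a i) (hr : ∀ i ∈ s, 0 < r i)
    (har : MonovaryOn a r s) :
    (∑ i ∈ s, a i ^ 2) / (∑ i ∈ s, a i) ^ 2 ≤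
      (∑ i ∈ s, (a i * r i) ^ 2) / (∑ i ∈ s, a i * r i) ^ 2 := by
  rcases s.eq_empty_or_nonempty with rfl | hs
  · simp
  have hA : 0 < ∑ i ∈ s, a i := sum_pos ha hs
  have hB : 0 < ∑ i ∈ s, a i * r i := sum_pos (fun i hi => mul_pos (ha i hi) (hr i hi)) hs
  have ha₀ : ∀ i ∈ s, 0 ≤ a i := fun i hi => (ha i hi).le
  have hprod : MonovaryOn (fun i => a i * r i) r s := fun i hi j hj hij =>
    mul_le_mul (har hi hj hij) hij.le (hr i hi).le (ha₀ j hj)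
  have hcheb_a : (∑ i ∈ s, a i ^ 2) * (∑ i ∈ s, a i * r i) ≤
      (∑ i ∈ s, a i) * ∑ i ∈ s, a i ^ 2 * r i := by
    simpa only [← sq, ← mul_assoc] using har.weighted_sum_mul_sum_le_sum_mul_sum ha₀
  have hcheb_ar : (∑ i ∈ s, a i ^ 2 * r i) * (∑ i ∈ s, a i * r i) ≤
      (∑ i ∈ s, a i) * ∑ i ∈ s, (a i * r i) ^ 2 := by
    convert hprod.weighted_sum_mul_sum_le_sum_mul_sum ha₀ using 2 <;>
      exact sum_congr rfl fun i _ => by ring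
  rw [div_le_div_iff₀ (by positivity) (by positivity)]
  calc (∑ i ∈ s, a i ^ 2) * (∑ i ∈ s, a i * r i) ^ 2
      ≤ (∑ i ∈ s, a i) * (∑ i ∈ s, a i ^ 2 * r i) * (∑ i ∈ s, a i * r i) := by
        rw [sq, ← mul_assoc]; exact mul_le_mul_of_nonneg_right hcheb_a hB.le
    _ ≤ (∑ i ∈ s, a i) * ((∑ i ∈ s, a i) * ∑ i ∈ s, (a i * r i) ^ 2) := by
        rw [mul_assoc]; exact mul_le_mul_of_nonneg_left hcheb_ar hA.le
    _ = (∑ i ∈ s, (a i * r i) ^ 2) * (∑ i ∈ s, a i) ^ 2 := by ring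

end CollisionProbability

theorem stmt16_general {T : Type*} (S : Finset T) (w : T → ℝ)
    (hw : ∀ τ ∈ S, 0 < w τ) (α : ℝ) (hα0 : 0 < α) (hα1 : α ≤ 1) :
    (∑ τ ∈ S, w τ ^ (2 * α)) / (∑ τ ∈ S, w τ ^ α) ^ 2 ≤
      (∑ τ ∈ S, w τ ^ (2 : ℝ)) / (∑ τ ∈ S, w τ) ^ 2 := by
  have hmono : MonovaryOn (fun τ => w τ ^ α) (fun τ => w τ ^ (1 - α)) S :=
    fun i hi j hj hlt => Real.rpow_le_rpow (hw i hi).le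
      (not_le.1 fun hji => hlt.not_ge (Real.rpow_le_rpow (hw j hj).le hji (by linarith))).le
      hα0.le
  have hsplit : ∀ τ ∈ S, w τ ^ α * w τ ^ (1 - α) = w τ := fun τ hτ => by
    rw [← Real.rpow_add (hw τ hτ), add_sub_cancel, Real.rpow_one]
  calc (∑ τ ∈ S, w τ ^ (2 * α)) / (∑ τ ∈ S, w τ ^ α) ^ 2
      = (∑ τ ∈ S, (w τ ^ α) ^ 2) / (∑ τ ∈ S, w τ ^ α) ^ 2 := by
        rw [sum_congr rfl fun τ hτ => by rw [mul_comm, Real.rpow_mul (hw τ hτ).le, Real.rpow_two]]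
    _ ≤ (∑ τ ∈ S, (w τ ^ α * w τ ^ (1 - α)) ^ 2) / (∑ τ ∈ S, w τ ^ α * w τ ^ (1 - α)) ^ 2 :=
        sum_sq_div_sq_sum_le_of_monovaryOn (fun τ hτ => Real.rpow_pos_of_pos (hw τ hτ) α)
          (fun τ hτ => Real.rpow_pos_of_pos (hw τ hτ) _) hmono
    _ = (∑ τ ∈ S, w τ ^ (2 : ℝ)) / (∑ τ ∈ S, w τ) ^ 2 := by
        simp only [Real.rpow_two]
        rw [sum_congr rfl fun τ hτ => by rw [hsplit τ hτ], sum_congr rfl hsplit]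

/-- Power transformation with exponent `0 < α ≤ 1` reduces the collision probability:
`Σ w^(2α)/(Σ w^α)² ≤ Σ w²/(Σ w)²`. -/
theorem stmt16 {T : Type*} (S : Finset T) (hS : S.Nonempty) (w : T → ℝ)
    (hw : ∀ τ ∈ S, 0 < w τ) (α : ℝ) (hα0 : 0 < α) (hα1 : α ≤ 1) :
    (∑ τ ∈ S, w τ ^ (2 * α)) / (∑ τ ∈ S, w τ ^ α) ^ 2 ≤
      (∑ τ ∈ S, w τ ^ (2 : ℝ)) / (∑ τ ∈ S, w τ) ^ 2 :=
  stmt16_general S w hw α hα0 hα1
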